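/- For all (ℓ,m) ∈ I with m > 1, setting L_{ℓ,m}(x) = (1−x²)^{1/2} Y_{ℓ,m}(x) and x̄_{ℓ,m} = ((ℓ²−m²+3/4)/(ℓ²−1/4))^{1/2}, one has x̄_{ℓ,m} < 1 and L_{ℓ,m}(x) · L_{ℓ,m}'(x) < 0 for every x ∈ (x̄_{ℓ,m}, 1). -/

import Mathlib

open Real Set

/-- Jacobi polynomial `P_j^{(α,α)}` via Rodrigues' formula. -/
noncomputable def jacobiP (j : ℕ) (α : ℝ) (x : ℝ) : ℝ :=
  ((-1 : ℝ) ^ j / (2 ^ j * (Nat.factorial j : ℝ))) * (1 - x ^ 2) ^ (-α) *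
    iteratedDeriv j (fun t : ℝ => (1 - t ^ 2) ^ (α + (j : ℝ))) x

/-- The normalization constant `c_{ℓm}`. -/
noncomputable def cConst (ℓ m : ℝ) : ℝ :=
  Real.sqrt (ℓ * Real.Gamma (ℓ - m + 1/2) * Real.Gamma (ℓ + m + 1/2)) /
    ((2 : ℝ) ^ m * Real.Gamma (ℓ + 1/2))

/-- The function `Y_{ℓ,m}`. -/
noncomputable def Yfun (ℓ m x : ℝ) : ℝ :=
  cConst ℓ m * (1 - x ^ 2) ^ (m / 2) * jacobiP ⌊ℓ - m - 1/2⌋₊ m x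

/-- Membership in the index set `I = {(ℓ,m) ∈ (ℕ/2)² : ℓ - m - 1/2 ∈ ℕ}`. -/
def memI (ℓ m : ℝ) : Prop :=
  (∃ n : ℕ, m = (n : ℝ) / 2) ∧ (∃ j : ℕ, ℓ - m - 1/2 = (j : ℝ))

/-- `b_{ℓ,m} = m / ℓ`. -/
noncomputable def bPt (ℓ m : ℝ) : ℝ := m / ℓ

/-- `a_{ℓ,m} = (1 - b_{ℓ,m}²)^{1/2}`. -/
noncomputable def aPt (ℓ m : ℝ) : ℝ := Real.sqrt (1 - bPt ℓ m ^ 2)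

/-- Membership in `ℕ_k = ℕ + (k-1)/2`. -/
def memNk (k : ℕ) (t : ℝ) : Prop := ∃ n : ℕ, t = (n : ℝ) + ((k : ℝ) - 1) / 2

/-- Membership in `I_d`. -/
def memId (d : ℕ) (ℓ m : ℝ) : Prop := memNk d ℓ ∧ memNk (d - 1) m ∧ m ≤ ℓ

/-- The function `X̃^d_{ℓ,m}`. -/
noncomputable def Xtilde (d : ℕ) (ℓ m x : ℝ) : ℝ :=
  (1 - x ^ 2) ^ (-((d : ℝ) - 2) / 4) * Yfun ℓ m x

/-- `L_{ℓ,m}(x) = (1-x²)^{1/2} Y_{ℓ,m}(x)`. -/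
noncomputable def Lfun (ℓ m : ℝ) : ℝ → ℝ := fun x => Real.sqrt (1 - x ^ 2) * Yfun ℓ m x

/-- The turning point `x̄_{ℓ,m}`. -/
noncomputable def xbar (ℓ m : ℝ) : ℝ :=
  Real.sqrt ((ℓ ^ 2 - m ^ 2 + 3/4) / (ℓ ^ 2 - 1/4))

/-!
Write `j = ℓ - m - 1/2` and `y = (d/dx)^j (1 - x²)^(m + j)`. Up to a nonzero constant,
`L = (1 - x²)^((1 - m)/2) y`, and the differential equation satisfied by the Rodrigues derivative
`y` becomes, for this choice of exponent, the first-order-free equation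
`(1 - x²)² L'' = ((ℓ² - 1/4) x² - (ℓ² - m² + 3/4)) L`, whose coefficient is positive for
`x > x̄`. There `(L L')' = L'² + L L'' ≥ 0`, strictly wherever `L ≠ 0`. Moreover
`L = (1 - x²)^((m + 1)/2) Q` with `Q` a polynomial and `Q(1) ≠ 0`, so for `m > 1` both `L` and `L'`
tend to `0` at `1`; hence the increasing function `L L'` is negative on `(x̄, 1)`.
-/

open Polynomial Filter Topology
open scoped ContDiff Nat

lemma one_sub_sq_pos_of_mem_Ioo {x : ℝ} (hx : x ∈ Ioo (-1 : ℝ) 1) : 0 < 1 - x ^ 2 := by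
  nlinarith [hx.1, hx.2]

lemma hasDerivAt_one_sub_sq (x : ℝ) : HasDerivAt (fun t : ℝ => 1 - t ^ 2) (-2 * x) x := by
  simpa using (hasDerivAt_pow 2 x).const_sub 1

lemma hasDerivAt_one_sub_sq_rpow (β : ℝ) {x : ℝ} (hx : 1 - x ^ 2 ≠ 0) :
    HasDerivAt (fun t : ℝ => (1 - t ^ 2) ^ β) (-2 * β * x * (1 - x ^ 2) ^ (β - 1)) x :=
  ((hasDerivAt_one_sub_sq x).rpow_const (Or.inl hx)).congr_deriv (by ring)

lemma HasDerivAt.one_sub_sq_rpow_mul {y : ℝ → ℝ} {y' x : ℝ} (γ : ℝ) (hy : HasDerivAt y y' x)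
    (hx : 1 - x ^ 2 ≠ 0) :
    HasDerivAt (fun t => (1 - t ^ 2) ^ γ * y t)
      ((1 - x ^ 2) ^ γ * y' - 2 * γ * x * (1 - x ^ 2) ^ (γ - 1) * y x) x :=
  ((hasDerivAt_one_sub_sq_rpow γ hx).mul hy).congr_deriv (by ring)

lemma HasDerivAt.eq_of_eqOn {f g : ℝ → ℝ} {a b x : ℝ} {s : Set ℝ} (hf : HasDerivAt f a x)
    (hg : HasDerivAt g b x) (hs : IsOpen s) (hx : x ∈ s) (hfg : EqOn f g s) : a = b :=
  hf.unique (hg.congr_of_eventuallyEq (eventually_of_mem (hs.mem_nhds hx) hfg))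

section Rodrigues

variable (β : ℝ)

lemma contDiffOn_iteratedDeriv_one_sub_sq_rpow (k : ℕ) :
    ContDiffOn ℝ ∞ (iteratedDeriv k fun t : ℝ => (1 - t ^ 2) ^ β) (Ioo (-1) 1) := by
  induction k with
  | zero =>
    refine (contDiffOn_const.sub (contDiffOn_id.pow 2)).rpow_const_of_ne fun x hx => ?_
    exact (one_sub_sq_pos_of_mem_Ioo hx).ne'
  | succ k ih =>
    rw [iteratedDeriv_succ]
    exact ih.deriv_of_isOpen isOpen_Ioo (by simp)

lemma hasDerivAt_iteratedDeriv_one_sub_sq_rpow (k : ℕ) {x : ℝ} (hx : x ∈ Ioo (-1 : ℝ) 1) :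
    HasDerivAt (iteratedDeriv k fun t : ℝ => (1 - t ^ 2) ^ β)
      (iteratedDeriv (k + 1) (fun t : ℝ => (1 - t ^ 2) ^ β) x) x := by
  rw [iteratedDeriv_succ]
  exact (((contDiffOn_iteratedDeriv_one_sub_sq_rpow β k).differentiableOn (by simp) x hx)
    |>.differentiableAt (isOpen_Ioo.mem_nhds hx)).hasDerivAt

lemma one_sub_sq_mul_iteratedDeriv_one_sub_sq_rpow (k : ℕ) {x : ℝ} (hx : x ∈ Ioo (-1 : ℝ) 1) :
    (1 - x ^ 2) * iteratedDeriv (k + 2) (fun t : ℝ => (1 - t ^ 2) ^ β) x =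
      2 * (k + 1 - β) * x * iteratedDeriv (k + 1) (fun t : ℝ => (1 - t ^ 2) ^ β) x
        - (k + 1) * (2 * β - k) * iteratedDeriv k (fun t : ℝ => (1 - t ^ 2) ^ β) x := by
  set F : ℝ → ℝ := fun t => (1 - t ^ 2) ^ β
  induction k generalizing x with
  | zero =>
    have hD := fun n => hasDerivAt_iteratedDeriv_one_sub_sq_rpow β n hx
    have hfirst : EqOn (fun t => (1 - t ^ 2) * iteratedDeriv 1 F t)
        (fun t => -2 * β * (t * iteratedDeriv 0 F t)) (Ioo (-1) 1) := by
      intro t ht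
      have hpos := one_sub_sq_pos_of_mem_Ioo ht
      simp only [iteratedDeriv_one, iteratedDeriv_zero,
        (hasDerivAt_one_sub_sq_rpow β hpos.ne').deriv, Real.rpow_sub_one hpos.ne', F]
      field_simp
    have h := ((hasDerivAt_one_sub_sq x).mul (hD 1)).eq_of_eqOn
      (((hasDerivAt_id' x).mul (hD 0)).const_mul (-2 * β)) isOpen_Ioo hx hfirst
    push_cast
    linear_combination h
  | succ k ih =>
    have hD := fun n => hasDerivAt_iteratedDeriv_one_sub_sq_rpow β n hx
    have h := ((hasDerivAt_one_sub_sq x).mul (hD (k + 2))).eq_of_eqOn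
      ((((hasDerivAt_id' x).const_mul (2 * (k + 1 - β))).mul (hD (k + 1))).sub
        ((hD k).const_mul ((k + 1) * (2 * β - k)))) isOpen_Ioo hx fun t ht => ih ht
    push_cast
    linear_combination h

lemma exists_iteratedDeriv_one_sub_sq_rpow_eq (k : ℕ) (hk : (k : ℝ) < β) :
    ∃ Q : ℝ[X], Q.eval 1 ≠ 0 ∧ ∀ x ∈ Ioo (-1 : ℝ) 1,
      iteratedDeriv k (fun t : ℝ => (1 - t ^ 2) ^ β) x = (1 - x ^ 2) ^ (β - k) * Q.eval x := by
  induction k with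
  | zero => exact ⟨1, by simp, fun x _ => by simp⟩
  | succ k ih =>
    obtain ⟨Q, hQ1, hQ⟩ := ih (by push_cast at hk; linarith)
    refine ⟨(1 - X ^ 2) * derivative Q - C (2 * (β - k)) * X * Q, ?_, fun x hx => ?_⟩
    · have : β - k ≠ 0 := by push_cast at hk; linarith
      simpa [this] using hQ1
    · have hpos := one_sub_sq_pos_of_mem_Ioo hx
      have hev : (iteratedDeriv k fun t : ℝ => (1 - t ^ 2) ^ β) =ᶠ[𝓝 x]
          fun t => (1 - t ^ 2) ^ (β - k) * Q.eval t :=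
        eventually_of_mem (isOpen_Ioo.mem_nhds hx) hQ
      rw [iteratedDeriv_succ, hev.deriv_eq,
        ((Q.hasDerivAt x).one_sub_sq_rpow_mul _ hpos.ne').deriv,
        show β - ((k + 1 : ℕ) : ℝ) = β - k - 1 by push_cast; ring, Real.rpow_sub_one hpos.ne']
      simp only [eval_sub, eval_mul, eval_one, eval_pow, eval_X, eval_C]
      field_simp

end Rodrigues

-- The function differentiated here is `L'` for `L = (1 - x²)^γ y`; matching `γ` with the
-- first-order coefficient `4γx` of the equation for `y` makes `L''` a multiple of `L`.
lemma hasDerivAt_liouville {γ c x y₂ : ℝ} {y y₁ : ℝ → ℝ} (hx : x ∈ Ioo (-1 : ℝ) 1)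
    (hy : HasDerivAt y (y₁ x) x) (hy₁ : HasDerivAt y₁ y₂ x)
    (hode : (1 - x ^ 2) * y₂ = 4 * γ * x * y₁ x - c * y x) :
    HasDerivAt (fun t => (1 - t ^ 2) ^ γ * y₁ t - 2 * γ * t * (1 - t ^ 2) ^ (γ - 1) * y t)
      (-((c + 2 * γ) - (c + 4 * γ ^ 2 - 2 * γ) * x ^ 2) / (1 - x ^ 2) ^ 2 *
        ((1 - x ^ 2) ^ γ * y x)) x := by
  have hpos := one_sub_sq_pos_of_mem_Ioo hx
  have h := (hy₁.one_sub_sq_rpow_mul γ hpos.ne').sub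
    ((((hasDerivAt_id' x).mul hy).one_sub_sq_rpow_mul (γ - 1) hpos.ne').const_mul (2 * γ))
  refine (h.congr_deriv ?_).congr_of_eventuallyEq (.of_forall fun t => ?_)
  · simp only [Pi.mul_apply, Real.rpow_sub_one hpos.ne']
    field_simp
    linear_combination (1 - x ^ 2) * hode
  · simp only [Pi.sub_apply, Pi.mul_apply]
    ring

lemma cConst_pos {ℓ m : ℝ} (hℓ : 0 < ℓ) (hm₁ : 0 < ℓ - m + 1 / 2) (hm₂ : 0 < ℓ + m + 1 / 2) :
    0 < cConst ℓ m := by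
  have h₁ := Real.Gamma_pos_of_pos hm₁
  have h₂ := Real.Gamma_pos_of_pos hm₂
  have h₃ := Real.Gamma_pos_of_pos (by linarith : 0 < ℓ + 1 / 2)
  unfold cConst
  positivity

section Lfun

variable {ℓ m : ℝ} {j : ℕ}

lemma Lfun_eq_of_mem_Ioo (hj : ℓ - m - 1 / 2 = j) {x : ℝ} (hx : x ∈ Ioo (-1 : ℝ) 1) :
    Lfun ℓ m x = cConst ℓ m * ((-1) ^ j / (2 ^ j * j !)) *
      ((1 - x ^ 2) ^ ((1 - m) / 2) *
        iteratedDeriv j (fun t : ℝ => (1 - t ^ 2) ^ (m + j)) x) := by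
  have hpos := one_sub_sq_pos_of_mem_Ioo hx
  have hfloor : ⌊ℓ - m - 1 / 2⌋₊ = j := by rw [hj, Nat.floor_natCast]
  have hrpow : (1 - x ^ 2) ^ (1 / 2 : ℝ) * (1 - x ^ 2) ^ (m / 2) * (1 - x ^ 2) ^ (-m) =
      (1 - x ^ 2) ^ ((1 - m) / 2) := by
    rw [← Real.rpow_add hpos, ← Real.rpow_add hpos]
    ring_nf
  simp only [Lfun, Yfun, jacobiP, hfloor, Real.sqrt_eq_rpow]
  linear_combination (cConst ℓ m * ((-1) ^ j / (2 ^ j * j !)) *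
    iteratedDeriv j (fun t : ℝ => (1 - t ^ 2) ^ (m + j)) x) * hrpow

lemma hasDerivAt_Lfun (hj : ℓ - m - 1 / 2 = j) {x : ℝ} (hx : x ∈ Ioo (-1 : ℝ) 1) :
    HasDerivAt (Lfun ℓ m) (cConst ℓ m * ((-1) ^ j / (2 ^ j * j !)) *
      ((1 - x ^ 2) ^ ((1 - m) / 2) *
          iteratedDeriv (j + 1) (fun t : ℝ => (1 - t ^ 2) ^ (m + j)) x
        - 2 * ((1 - m) / 2) * x * (1 - x ^ 2) ^ ((1 - m) / 2 - 1) *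
          iteratedDeriv j (fun t : ℝ => (1 - t ^ 2) ^ (m + j)) x)) x :=
  (((hasDerivAt_iteratedDeriv_one_sub_sq_rpow _ j hx).one_sub_sq_rpow_mul _
    (one_sub_sq_pos_of_mem_Ioo hx).ne').const_mul _).congr_of_eventuallyEq
    (eventually_of_mem (isOpen_Ioo.mem_nhds hx) fun _ ht => Lfun_eq_of_mem_Ioo hj ht)

lemma hasDerivAt_deriv_Lfun (hj : ℓ - m - 1 / 2 = j) {x : ℝ} (hx : x ∈ Ioo (-1 : ℝ) 1) :
    HasDerivAt (deriv (Lfun ℓ m))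
      (-((ℓ ^ 2 - m ^ 2 + 3 / 4) - (ℓ ^ 2 - 1 / 4) * x ^ 2) / (1 - x ^ 2) ^ 2 *
        Lfun ℓ m x) x := by
  have hode := one_sub_sq_mul_iteratedDeriv_one_sub_sq_rpow (m + j) j hx
  have h := (hasDerivAt_liouville (γ := (1 - m) / 2) (c := (j + 1) * (2 * m + j)) hx
    (hasDerivAt_iteratedDeriv_one_sub_sq_rpow _ j hx)
    (hasDerivAt_iteratedDeriv_one_sub_sq_rpow _ (j + 1) hx)
    (by linear_combination hode)).const_mul (cConst ℓ m * ((-1) ^ j / (2 ^ j * j !)))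
  refine (h.congr_deriv ?_).congr_of_eventuallyEq (eventually_of_mem (isOpen_Ioo.mem_nhds hx)
    fun t ht => (hasDerivAt_Lfun hj ht).deriv)
  rw [Lfun_eq_of_mem_Ioo hj hx, show ℓ = j + m + 1 / 2 by linarith]
  ring

lemma exists_Lfun_eq_one_sub_sq_rpow_mul_eval (hj : ℓ - m - 1 / 2 = j) (hm : 0 < m) :
    ∃ Q : ℝ[X], Q.eval 1 ≠ 0 ∧
      ∀ x ∈ Ioo (-1 : ℝ) 1, Lfun ℓ m x = (1 - x ^ 2) ^ ((m + 1) / 2) * Q.eval x := by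
  have hj₀ : (0 : ℝ) ≤ j := j.cast_nonneg
  obtain ⟨Q, hQ1, hQ⟩ := exists_iteratedDeriv_one_sub_sq_rpow_eq (m + j) j (by linarith)
  have hK : cConst ℓ m * ((-1) ^ j / (2 ^ j * j !)) ≠ 0 :=
    mul_ne_zero (cConst_pos (by linarith) (by linarith) (by linarith)).ne'
      (div_ne_zero (pow_ne_zero _ (by norm_num)) (by positivity))
  refine ⟨C (cConst ℓ m * ((-1) ^ j / (2 ^ j * j !))) * Q, by simp [hK, hQ1], fun x hx => ?_⟩
  rw [Lfun_eq_of_mem_Ioo hj hx, hQ x hx, add_sub_cancel_right, eval_mul, eval_C,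
    show (m + 1) / 2 = (1 - m) / 2 + m by ring, Real.rpow_add (one_sub_sq_pos_of_mem_Ioo hx)]
  ring

end Lfun

section BoundaryBehaviour

variable {f : ℝ → ℝ} {p : ℝ} {Q : ℝ[X]}

lemma tendsto_one_sub_sq_rpow_mul_eval (hp : 0 < p) :
    Tendsto (fun x : ℝ => (1 - x ^ 2) ^ p * Q.eval x) (𝓝[<] 1) (𝓝 0) := by
  have h : ContinuousAt (fun x : ℝ => (1 - x ^ 2) ^ p * Q.eval x) 1 :=
    ((continuousAt_const.sub (continuousAt_id.pow 2)).rpow_const (Or.inr hp.le)).mul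
      Q.continuousAt
  simpa [Real.zero_rpow hp.ne'] using h.tendsto.mono_left nhdsWithin_le_nhds

lemma tendsto_nhdsLT_one_of_eq_one_sub_sq_rpow_mul_eval
    (hf : ∀ x ∈ Ioo (-1 : ℝ) 1, f x = (1 - x ^ 2) ^ p * Q.eval x) (hp : 0 < p) :
    Tendsto f (𝓝[<] 1) (𝓝 0) :=
  (tendsto_one_sub_sq_rpow_mul_eval hp).congr'
    (eventually_of_mem (Ioo_mem_nhdsLT (show (-1 : ℝ) < 1 by norm_num)) fun x hx =>
      (hf x hx).symm)

lemma tendsto_deriv_nhdsLT_one_of_eq_one_sub_sq_rpow_mul_eval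
    (hf : ∀ x ∈ Ioo (-1 : ℝ) 1, f x = (1 - x ^ 2) ^ p * Q.eval x) (hp : 1 < p) :
    Tendsto (deriv f) (𝓝[<] 1) (𝓝 0) := by
  refine (tendsto_one_sub_sq_rpow_mul_eval
    (Q := (1 - X ^ 2) * derivative Q - C (2 * p) * X * Q) (by linarith : 0 < p - 1)).congr'
    (eventually_of_mem (Ioo_mem_nhdsLT (show (-1 : ℝ) < 1 by norm_num)) fun x hx => ?_)
  have hpos := one_sub_sq_pos_of_mem_Ioo hx
  have hev : f =ᶠ[𝓝 x] fun t => (1 - t ^ 2) ^ p * Q.eval t :=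
    eventually_of_mem (isOpen_Ioo.mem_nhds hx) hf
  rw [hev.deriv_eq,
    ((Q.hasDerivAt x).one_sub_sq_rpow_mul p hpos.ne').deriv, Real.rpow_sub_one hpos.ne']
  simp only [eval_sub, eval_mul, eval_one, eval_pow, eval_X, eval_C]
  field_simp

lemma eventually_ne_zero_nhdsLT_one_of_eq_one_sub_sq_rpow_mul_eval
    (hf : ∀ x ∈ Ioo (-1 : ℝ) 1, f x = (1 - x ^ 2) ^ p * Q.eval x) (hQ : Q.eval 1 ≠ 0) :
    ∀ᶠ x in 𝓝[<] 1, f x ≠ 0 := by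
  filter_upwards [(Q.continuousAt.eventually_ne hQ).filter_mono nhdsWithin_le_nhds,
    Ioo_mem_nhdsLT (show (-1 : ℝ) < 1 by norm_num)] with x hQx hx
  rw [hf x hx]
  exact mul_ne_zero (Real.rpow_pos_of_pos (one_sub_sq_pos_of_mem_Ioo hx) p).ne' hQx

end BoundaryBehaviour

lemma neg_of_hasDerivAt_nonneg_of_tendsto_nhdsLT_zero {g g' : ℝ → ℝ} {a b : ℝ}
    (hg : ∀ x ∈ Ioo a b, HasDerivAt g (g' x) x) (hg' : ∀ x ∈ Ioo a b, 0 ≤ g' x)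
    (hpos : ∃ᶠ x in 𝓝[<] b, 0 < g' x) (hlim : Tendsto g (𝓝[<] b) (𝓝 0))
    {x : ℝ} (hx : x ∈ Ioo a b) : g x < 0 := by
  have hmono : MonotoneOn g (Ioo a b) :=
    monotoneOn_of_hasDerivWithinAt_nonneg (convex_Ioo a b)
      (fun t ht => (hg t ht).continuousAt.continuousWithinAt)
      (fun t ht => (hg t (interior_subset ht)).hasDerivWithinAt)
      (fun t ht => hg' t (interior_subset ht))
  have hle : ∀ t ∈ Ioo a b, g t ≤ 0 := fun t ht =>
    ge_of_tendsto hlim (eventually_of_mem (Ioo_mem_nhdsLT ht.2)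
      fun s hs => hmono ht ⟨ht.1.trans hs.1, hs.2⟩ hs.1.le)
  obtain ⟨y, hy, hxy⟩ := (hpos.and_eventually (Ioo_mem_nhdsLT hx.2)).exists
  refine (hle x hx).lt_of_ne fun hgx => hy.ne' ?_
  have hzero : EqOn g (fun _ => 0) (Ioo x b) := fun t ht =>
    le_antisymm (hle t ⟨hx.1.trans ht.1, ht.2⟩) (hgx ▸ hmono hx ⟨hx.1.trans ht.1, ht.2⟩ ht.1.le)
  exact (hg y ⟨hx.1.trans hxy.1, hxy.2⟩).eq_of_eqOn (hasDerivAt_const y 0) isOpen_Ioo hxy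
    hzero

lemma xbar_lt_one {ℓ m : ℝ} (hℓ : 1 / 2 < ℓ) (hm : 1 < m) : xbar ℓ m < 1 := by
  have hB : 0 < ℓ ^ 2 - 1 / 4 := by nlinarith
  rw [xbar, Real.sqrt_lt' one_pos, one_pow, div_lt_one hB]
  nlinarith

lemma sub_mul_sq_neg_of_xbar_lt {ℓ m x : ℝ} (hℓ : 1 / 2 < ℓ) (hx : xbar ℓ m < x) :
    ℓ ^ 2 - m ^ 2 + 3 / 4 - (ℓ ^ 2 - 1 / 4) * x ^ 2 < 0 := by
  have hB : 0 < ℓ ^ 2 - 1 / 4 := by nlinarith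
  have h := (Real.sqrt_lt' ((Real.sqrt_nonneg _).trans_lt hx)).mp hx
  rw [div_lt_iff₀ hB] at h
  linarith

theorem stmt13 (ℓ m : ℝ) (hI : memI ℓ m) (hm : 1 < m) :
    xbar ℓ m < 1 ∧
    ∀ x ∈ Set.Ioo (xbar ℓ m) 1, Lfun ℓ m x * deriv (Lfun ℓ m) x < 0 := by
  obtain ⟨-, j, hj⟩ := hI
  have hℓ : 1 / 2 < ℓ := by linarith [j.cast_nonneg (α := ℝ)]
  refine ⟨xbar_lt_one hℓ hm, fun x hx => ?_⟩
  have hxbar : 0 ≤ xbar ℓ m := Real.sqrt_nonneg _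
  have hsub : Ioo (xbar ℓ m) 1 ⊆ Ioo (-1) 1 := Ioo_subset_Ioo_left (by linarith)
  obtain ⟨Q, hQ1, hLQ⟩ := exists_Lfun_eq_one_sub_sq_rpow_mul_eval hj (by linarith)
  set L := Lfun ℓ m
  set q : ℝ → ℝ := fun t =>
    -(ℓ ^ 2 - m ^ 2 + 3 / 4 - (ℓ ^ 2 - 1 / 4) * t ^ 2) / (1 - t ^ 2) ^ 2
  have hq : ∀ t ∈ Ioo (xbar ℓ m) 1, 0 < q t := fun t ht =>
    div_pos (neg_pos.2 (sub_mul_sq_neg_of_xbar_lt hℓ ht.1))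
      (pow_pos (one_sub_sq_pos_of_mem_Ioo (hsub ht)) 2)
  refine neg_of_hasDerivAt_nonneg_of_tendsto_nhdsLT_zero
    (g := fun t => L t * deriv L t) (g' := fun t => deriv L t ^ 2 + q t * L t ^ 2)
    (fun t ht => ?_) (fun t ht => by have := hq t ht; positivity) ?_ ?_ hx
  · exact ((hasDerivAt_Lfun hj (hsub ht)).differentiableAt.hasDerivAt.mul
      (hasDerivAt_deriv_Lfun hj (hsub ht))).congr_deriv (by ring)
  · refine Eventually.frequently ?_
    filter_upwards [eventually_ne_zero_nhdsLT_one_of_eq_one_sub_sq_rpow_mul_eval hLQ hQ1,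
      Ioo_mem_nhdsLT (xbar_lt_one hℓ hm)] with t hLt ht
    have := hq t ht
    positivity
  · simpa using (tendsto_nhdsLT_one_of_eq_one_sub_sq_rpow_mul_eval hLQ (by linarith)).mul
      (tendsto_deriv_nhdsLT_one_of_eq_one_sub_sq_rpow_mul_eval hLQ (by linarith))
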